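/- arXiv:2205.07791 — 2 statements merged into one kernel-verified Lean document; each statement's English description precedes it below -/
import Mathlib

section
/- The 2×2 matrix A = [[1,0],[0,0]] together with u = (1,1) gives a counterexample to the strict inequality in Moussong's Lemma 9.5: the nerve N(A) consists of the single point z = (1,0), the vector u has nonnegative coordinates with uᵀAu = 1, and for the unique point z of N(A) one has uᵀAz = 1, not strictly greater than 1. -/
open Matrix

/-- The nerve of an almost negative matrix `A`: the set of vectors with nonnegative
coordinates, supported on an index set `I` with `A_I` positive definite, and of norm 1
with respect to the bilinear form of `A`. -/
def nerve {n : ℕ} (A : Matrix (Fin n) (Fin n) ℝ) : Set (Fin n → ℝ) :=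
  {z | (∀ i, 0 ≤ z i) ∧
    (∃ I : Finset (Fin n), (∀ i, i ∉ I → z i = 0) ∧
      (A.submatrix (fun x : I => (x : Fin n)) (fun x : I => (x : Fin n))).PosDef) ∧
    z ⬝ᵥ A.mulVec z = 1}

/-! A positive definite principal submatrix has positive diagonal, so every point of the nerve
vanishes at the indices where `A` has a nonpositive diagonal entry. For `A = [[1,0],[0,0]]` this
forces `z = (z₀, 0)` with `z₀² = 1`, and conversely `(1,0)` lies in the nerve via `I = {0}`. -/

theorem Matrix.posDef_submatrix_singleton {ι R : Type*} [DecidableEq ι] [CommRing R]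
    [PartialOrder R] [StarRing R] [StarOrderedRing R] [NoZeroDivisors R]
    (A : Matrix ι ι R) {i : ι} (hA : 0 < A i i) :
    (A.submatrix (fun x : ({i} : Finset ι) => (x : ι))
      (fun x : ({i} : Finset ι) => (x : ι))).PosDef := by
  have hdiag : A.submatrix (fun x : ({i} : Finset ι) => (x : ι))
      (fun x : ({i} : Finset ι) => (x : ι)) =
        (diagonal fun _ => A i i : Matrix ({i} : Finset ι) ({i} : Finset ι) R) := by
    ext ⟨a, ha⟩ ⟨b, hb⟩
    rw [Finset.mem_singleton] at ha hb
    subst ha hb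
    simp
  rw [hdiag]
  exact .diagonal fun _ => hA

theorem apply_eq_zero_of_mem_nerve_of_diag_nonpos {n : ℕ} {A : Matrix (Fin n) (Fin n) ℝ}
    {z : Fin n → ℝ} (hz : z ∈ nerve A) {i : Fin n} (hAi : A i i ≤ 0) : z i = 0 := by
  obtain ⟨-, ⟨I, hzI, hA⟩, -⟩ := hz
  by_contra hzi
  exact hAi.not_gt (hA.diag_pos (i := ⟨i, by_contra (hzi ∘ hzI i)⟩))

theorem single_mem_nerve {n : ℕ} {A : Matrix (Fin n) (Fin n) ℝ} {i : Fin n} (hAi : A i i = 1) :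
    Pi.single i 1 ∈ nerve A := by
  refine ⟨fun j => ?_, ⟨{i}, fun j hj => ?_, posDef_submatrix_singleton A (hAi ▸ one_pos)⟩, ?_⟩
  · by_cases hj : j = i <;> simp [hj]
  · exact Pi.single_eq_of_ne (by simpa using hj) 1
  · simp [hAi]

/-- The matrix `A = [[1,0],[0,0]]` and `u = (1,1)` give a counterexample to the
strict inequality of Moussong's Lemma 9.5: `N(A) = {(1,0)}`, `u` has nonnegative coordinates
with `⟨u,u⟩ = 1`, and for the unique point `z = (1,0)` of `N(A)` one has `⟨u,z⟩ = 1`,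
not `> 1`. -/
theorem stmt2 :
    nerve (!![1, 0; 0, 0] : Matrix (Fin 2) (Fin 2) ℝ) = {![1, 0]} ∧
    (∀ i, 0 ≤ (![1, 1] : Fin 2 → ℝ) i) ∧
    (![1, 1] : Fin 2 → ℝ) ⬝ᵥ (!![1, 0; 0, 0] : Matrix (Fin 2) (Fin 2) ℝ).mulVec ![1, 1] = 1 ∧
    (![1, 1] : Fin 2 → ℝ) ⬝ᵥ (!![1, 0; 0, 0] : Matrix (Fin 2) (Fin 2) ℝ).mulVec ![1, 0] = 1 := by
  refine ⟨Set.eq_singleton_iff_unique_mem.mpr ⟨?_, fun z hz => ?_⟩, fun i => ?_, ?_, ?_⟩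
  · have hsingle : (![1, 0] : Fin 2 → ℝ) = Pi.single 0 1 := by
      ext j; fin_cases j <;> simp
    exact hsingle ▸ single_mem_nerve (by simp)
  · have hz1 : z 1 = 0 := apply_eq_zero_of_mem_nerve_of_diag_nonpos hz (by simp)
    have hz0_sq : z 0 ^ 2 = 1 := by
      simpa [dotProduct, mulVec, Fin.sum_univ_two, sq] using hz.2.2
    have hz0 : z 0 = 1 := by nlinarith [hz.1 0]
    ext j; fin_cases j <;> simp [hz0, hz1]
  · fin_cases i <;> simp
  · simp [dotProduct, mulVec, Fin.sum_univ_two]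
  · simp [dotProduct, mulVec, Fin.sum_univ_two]
end

section
/- Let C be an almost negative m×m matrix with c₁₁ > 0 such that lk({1}, C) is parabolic, C is irreducible, and lk({1}, C) is irreducible. Then C is parabolic. -/
open Matrix

/-- The link matrix `lk({0}, C)`. -/
noncomputable def lkOne {n : ℕ} (C : Matrix (Fin (n + 1)) (Fin (n + 1)) ℝ) : Matrix (Fin n) (Fin n) ℝ :=
  Matrix.of fun i j => C i.succ j.succ - C 0 i.succ * C 0 j.succ / C 0 0

/-- A symmetric real matrix is parabolic if it has order ≥ 2, determinant 0, and all proper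
principal submatrices are positive definite. -/
def Parabolic {m : Type*} [Fintype m] [DecidableEq m] (A : Matrix m m ℝ) : Prop :=
  2 ≤ Fintype.card m ∧ A.det = 0 ∧
    ∀ S : Finset m, S ≠ Finset.univ →
      (A.submatrix (fun x : S => (x : m)) (fun x : S => (x : m))).PosDef

/-- A symmetric matrix is reducible if its index set admits a partition into two nonempty
parts with all entries between the parts equal to zero. -/
def MatrixReducible {m : Type*} [Fintype m] [DecidableEq m] (A : Matrix m m ℝ) : Prop :=
  ∃ L M : Finset m, L.Nonempty ∧ M.Nonempty ∧ Disjoint L M ∧ L ∪ M = Finset.univ ∧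
    ∀ l ∈ L, ∀ k ∈ M, A l k = 0

/-!
Completing the square in the first coordinate gives, with `b = (c₀ⱼ)ⱼ≥₁` and `x = (x₀, x')`,
`xᵀ C x = c₀₀ (x₀ + ⟨b, x'⟩ / c₀₀)² + x'ᵀ lk(C) x'`. Hence `C` is positive semidefinite because
`lk(C)` is, and a kernel vector `u` of `lk(C)` lifts to the kernel vector `(-⟨b, u⟩ / c₀₀, u)` of `C`,
so `det C = 0`. For an almost negative positive semidefinite matrix, `|u|` lies in the kernel
whenever `u` does, and the zero set of a nonnegative kernel vector splits off a block of the matrix.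
So if `C` is irreducible, its nonzero kernel vectors have no zero entries: the quadratic form of `C`
is positive on every nonzero vector vanishing somewhere, i.e. on every proper principal submatrix.
-/

open Finset

section General

variable {m : Type*} [Fintype m]

lemma dotProduct_mulVec_submatrix_restrict (A : Matrix m m ℝ) {S : Finset m} {y : m → ℝ}
    (hy : ∀ i ∉ S, y i = 0) :
    (fun i : S => y i) ⬝ᵥ A.submatrix (fun x : S => (x : m)) (fun x : S => (x : m)) *ᵥ
      (fun i : S => y i) = y ⬝ᵥ A *ᵥ y := by
  have hsum : ∀ f : m → ℝ, (∀ i ∉ S, f i = 0) → ∑ i : S, f i = ∑ i, f i := fun f hf =>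
    (sum_coe_sort S f).trans (sum_subset S.subset_univ fun i _ hi => hf i hi)
  simp only [dotProduct, mulVec, submatrix_apply]
  rw [← hsum _ fun i hi => by simp [hy i hi]]
  refine sum_congr rfl fun i _ => ?_
  rw [hsum (fun j => A i j * y j) fun j hj => by simp [hy j hj]]

lemma dotProduct_mulVec_abs_le {A : Matrix m m ℝ} (hneg : ∀ i j, i ≠ j → A i j ≤ 0)
    (u : m → ℝ) : |u| ⬝ᵥ A *ᵥ |u| ≤ u ⬝ᵥ A *ᵥ u := by
  simp only [dotProduct, mulVec, mul_sum, Pi.abs_apply]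
  refine sum_le_sum fun i _ => sum_le_sum fun j _ => ?_
  rcases eq_or_ne i j with rfl | hij
  · exact le_of_eq (by linear_combination A i i * abs_mul_abs_self (u i))
  · have hA := hneg i j hij
    have hu : u i * u j ≤ |u i| * |u j| := abs_mul (u i) (u j) ▸ le_abs_self _
    nlinarith

lemma mulVec_abs_eq_zero {A : Matrix m m ℝ} (hneg : ∀ i j, i ≠ j → A i j ≤ 0)
    (hA : A.PosSemidef) {u : m → ℝ} (hu : A *ᵥ u = 0) : A *ᵥ |u| = 0 := by
  refine (hA.dotProduct_mulVec_zero_iff |u|).mp (le_antisymm ?_ (hA.dotProduct_mulVec_nonneg _))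
  calc star |u| ⬝ᵥ A *ᵥ |u| ≤ u ⬝ᵥ A *ᵥ u := dotProduct_mulVec_abs_le hneg u
    _ = 0 := by rw [hu, dotProduct_zero]

variable [DecidableEq m]

lemma dotProduct_mulVec_add_smul_single {A : Matrix m m ℝ} (hA : A.IsSymm) {y : m → ℝ} {i : m}
    (hy : (A *ᵥ y) i = 0) (t : ℝ) :
    (y + t • Pi.single i 1) ⬝ᵥ A *ᵥ (y + t • Pi.single i 1) = y ⬝ᵥ A *ᵥ y + t ^ 2 * A i i := by
  have hy' : y ⬝ᵥ A *ᵥ Pi.single i 1 = 0 := by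
    rw [dotProduct_mulVec, ← mulVec_transpose, hA.eq, dotProduct_single, hy, zero_mul]
  simp only [mulVec_add, mulVec_smul, add_dotProduct, dotProduct_add, smul_dotProduct,
    dotProduct_smul, hy']
  simp only [single_dotProduct, hy, mulVec_single, MulOpposite.op_one, one_smul, col_apply,
    smul_eq_mul]
  ring

lemma posDef_submatrix_iff {A : Matrix m m ℝ} (hA : A.IsHermitian) (S : Finset m) :
    (A.submatrix (fun x : S => (x : m)) (fun x : S => (x : m))).PosDef ↔
      ∀ y : m → ℝ, y ≠ 0 → (∀ i ∉ S, y i = 0) → 0 < y ⬝ᵥ A *ᵥ y := by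
  constructor
  · intro h y hy0 hy
    rw [← dotProduct_mulVec_submatrix_restrict A hy]
    obtain ⟨i, hi⟩ := Function.ne_iff.mp hy0
    have hS : i ∈ S := by_contra fun h => hi (hy i h)
    simpa using h.dotProduct_mulVec_pos (Function.ne_iff.mpr ⟨⟨i, hS⟩, hi⟩)
  · intro h
    refine .of_dotProduct_mulVec_pos (hA.submatrix _) fun x hx => ?_
    set y : m → ℝ := fun i => if h : i ∈ S then x ⟨i, h⟩ else 0
    have hxy : (fun i : S => y i) = x := funext fun i => dif_pos i.2
    have hy : ∀ i ∉ S, y i = 0 := fun i hi => dif_neg hi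
    rw [star_trivial, ← hxy, dotProduct_mulVec_submatrix_restrict A hy]
    exact h y (fun h0 => hx (by rw [← hxy, h0]; rfl)) hy

lemma Parabolic.posSemidef {A : Matrix m m ℝ} (hA : A.IsSymm) (h : Parabolic A) :
    A.PosSemidef := by
  obtain ⟨u, hu0, hu⟩ := exists_mulVec_eq_zero_iff.mpr h.2.1
  obtain ⟨i, hi⟩ := Function.ne_iff.mp hu0
  refine .of_dotProduct_mulVec_nonneg (isHermitian_iff_isSymm.mpr hA) fun x => ?_
  -- moving `x` along the kernel vector `u` kills its `i`-th entry without changing the form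
  set y := x - (x i / u i) • u
  have huA : u ᵥ* A = 0 := by rw [← mulVec_transpose, hA.eq, hu]
  have hy : y ⬝ᵥ A *ᵥ y = x ⬝ᵥ A *ᵥ x := by
    rw [mulVec_sub, mulVec_smul, hu, smul_zero, sub_zero, sub_dotProduct, smul_dotProduct,
      dotProduct_mulVec u, huA, zero_dotProduct, smul_zero, sub_zero]
  have hyi : ∀ j ∉ univ.erase i, y j = 0 := fun j hj => by
    obtain rfl : j = i := by simpa using hj
    simp [y, div_mul_cancel₀ _ hi]
  rw [star_trivial, ← hy]
  rcases eq_or_ne y 0 with h0 | h0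
  · simp [h0]
  · exact ((posDef_submatrix_iff (isHermitian_iff_isSymm.mpr hA) _).mp
      (h.2.2 _ (erase_ssubset (mem_univ i)).ne) y h0 hyi).le

lemma matrixReducible_of_nonneg_of_mulVec_eq_zero {A : Matrix m m ℝ}
    (hneg : ∀ i j, i ≠ j → A i j ≤ 0) {w : m → ℝ} (hw : 0 ≤ w) (hAw : A *ᵥ w = 0)
    (hw0 : w ≠ 0) {i : m} (hi : w i = 0) : MatrixReducible A := by
  obtain ⟨k, hk⟩ := Function.ne_iff.mp hw0
  refine ⟨univ.filter (w · = 0), univ.filter (w · ≠ 0), ⟨i, by simp [hi]⟩, ⟨k, by simpa using hk⟩,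
    disjoint_filter_filter_not _ _ _, filter_union_filter_not_eq _ _, fun l hl k hk => ?_⟩
  simp only [mem_filter, mem_univ, true_and] at hl hk
  -- row `l` of `A w = 0` is a sum of nonpositive terms, so each of them vanishes
  have hterms : ∀ j ∈ univ, A l j * w j ≤ 0 := fun j _ => by
    rcases eq_or_ne l j with rfl | hlj
    · simp [hl]
    · exact mul_nonpos_of_nonpos_of_nonneg (hneg l j hlj) (hw j)
  have := (sum_eq_zero_iff_of_nonpos hterms).mp (congrFun hAw l) k (mem_univ k)
  exact (mul_eq_zero.mp this).resolve_right hk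

lemma apply_ne_zero_of_mulVec_eq_zero {A : Matrix m m ℝ} (hneg : ∀ i j, i ≠ j → A i j ≤ 0)
    (hA : A.PosSemidef) (hirr : ¬ MatrixReducible A) {u : m → ℝ} (hu0 : u ≠ 0)
    (hu : A *ᵥ u = 0) (i : m) : u i ≠ 0 := fun hi =>
  hirr (matrixReducible_of_nonneg_of_mulVec_eq_zero hneg (abs_nonneg u)
    (mulVec_abs_eq_zero hneg hA hu) (by simpa using hu0) (i := i) (by simp [hi]))

lemma posDef_submatrix_of_not_matrixReducible {A : Matrix m m ℝ}
    (hneg : ∀ i j, i ≠ j → A i j ≤ 0) (hA : A.PosSemidef) (hirr : ¬ MatrixReducible A)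
    {S : Finset m} (hS : S ≠ univ) :
    (A.submatrix (fun x : S => (x : m)) (fun x : S => (x : m))).PosDef := by
  obtain ⟨i, hi⟩ : ∃ i, i ∉ S := by simpa [eq_univ_iff_forall] using hS
  refine (posDef_submatrix_iff hA.isHermitian S).mpr fun y hy0 hy => ?_
  refine lt_of_le_of_ne (by simpa using hA.dotProduct_mulVec_nonneg y) fun h0 => ?_
  have hAy : A *ᵥ y = 0 := (hA.dotProduct_mulVec_zero_iff y).mp (by simpa using h0.symm)
  exact apply_ne_zero_of_mulVec_eq_zero hneg hA hirr hy0 hAy i (hy i hi)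

end General

section Link

variable {n : ℕ} {C : Matrix (Fin (n + 1)) (Fin (n + 1)) ℝ}

lemma isSymm_lkOne (hC : C.IsSymm) : (lkOne C).IsSymm :=
  IsSymm.ext fun i j => by simp only [lkOne, of_apply, hC.apply i.succ j.succ]; ring

lemma mulVec_vecCons_eq_vecCons_lkOne_mulVec (hC : C.IsSymm) (hc : C 0 0 ≠ 0) (x : Fin n → ℝ) :
    C *ᵥ vecCons (-(Fin.tail (C 0) ⬝ᵥ x / C 0 0)) x = vecCons 0 (lkOne C *ᵥ x) := by
  ext i
  refine Fin.cases ?_ (fun i => ?_) i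
  · simp only [mulVec, dotProduct, Fin.tail, Fin.sum_univ_succ, cons_val_zero, cons_val_succ,
      mul_neg]
    field_simp
    ring
  · simp only [mulVec, dotProduct, Fin.tail, Fin.sum_univ_succ, hC.apply 0 i.succ, cons_val_zero,
      cons_val_succ, mul_neg, lkOne, of_apply, sub_mul, sum_sub_distrib]
    rw [sum_div, mul_sum, neg_add_eq_sub]
    congr 1
    exact sum_congr rfl fun j _ => by ring

lemma dotProduct_mulVec_eq_sq_add_lkOne (hC : C.IsSymm) (hc : C 0 0 ≠ 0)
    (x : Fin (n + 1) → ℝ) :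
    x ⬝ᵥ C *ᵥ x = C 0 0 * (x 0 + Fin.tail (C 0) ⬝ᵥ Fin.tail x / C 0 0) ^ 2
      + Fin.tail x ⬝ᵥ lkOne C *ᵥ Fin.tail x := by
  set t := x 0 + Fin.tail (C 0) ⬝ᵥ Fin.tail x / C 0 0
  set y := vecCons (-(Fin.tail (C 0) ⬝ᵥ Fin.tail x / C 0 0)) (Fin.tail x)
  have hx : x = y + t • Pi.single 0 1 := by
    ext i
    refine Fin.cases ?_ (fun i => ?_) i
    · simp [y, t]
    · simp [y, Fin.tail]
  have hCy := mulVec_vecCons_eq_vecCons_lkOne_mulVec hC hc (Fin.tail x)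
  conv_lhs => rw [hx, dotProduct_mulVec_add_smul_single hC (by rw [hCy]; rfl), hCy,
    cons_dotProduct_cons]
  ring

lemma posSemidef_of_posSemidef_lkOne (hC : C.IsSymm) (hc : 0 < C 0 0)
    (h : (lkOne C).PosSemidef) : C.PosSemidef := by
  refine .of_dotProduct_mulVec_nonneg (isHermitian_iff_isSymm.mpr hC) fun x => ?_
  rw [star_trivial, dotProduct_mulVec_eq_sq_add_lkOne hC hc.ne']
  have := h.dotProduct_mulVec_nonneg (Fin.tail x)
  rw [star_trivial] at this
  positivity

lemma det_eq_zero_of_det_lkOne_eq_zero (hC : C.IsSymm) (hc : C 0 0 ≠ 0)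
    (h : (lkOne C).det = 0) : C.det = 0 := by
  obtain ⟨u, hu0, hu⟩ := exists_mulVec_eq_zero_iff.mpr h
  refine exists_mulVec_eq_zero_iff.mp
    ⟨vecCons (-(Fin.tail (C 0) ⬝ᵥ u / C 0 0)) u, fun h0 => hu0 ?_, ?_⟩
  · simpa using congrArg vecTail h0
  · rw [mulVec_vecCons_eq_vecCons_lkOne_mulVec hC hc u, hu]
    simp

end Link

theorem stmt6_general (n : ℕ) (C : Matrix (Fin (n + 1)) (Fin (n + 1)) ℝ) (hsymm : C.IsSymm)
    (hneg : ∀ i j : Fin (n + 1), i ≠ j → C i j ≤ 0) (hpos : 0 < C 0 0)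
    (hpar : Parabolic (lkOne C)) (hirr : ¬ MatrixReducible C) : Parabolic C := by
  have hn : 2 ≤ n := by simpa using hpar.1
  have hC : C.PosSemidef :=
    posSemidef_of_posSemidef_lkOne hsymm hpos (hpar.posSemidef (isSymm_lkOne hsymm))
  exact ⟨by simp; omega, det_eq_zero_of_det_lkOne_eq_zero hsymm hpos.ne' hpar.2.1,
    fun S hS => posDef_submatrix_of_not_matrixReducible hneg hC hirr hS⟩

/-- If `C` is almost negative with `C 0 0 > 0`, `lk({0}, C)` is parabolic, and both
`C` and `lk({0}, C)` are irreducible, then `C` is parabolic. -/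
theorem stmt6 (n : ℕ) (C : Matrix (Fin (n + 1)) (Fin (n + 1)) ℝ) (hsymm : C.IsSymm)
    (hneg : ∀ i j : Fin (n + 1), i ≠ j → C i j ≤ 0) (hpos : 0 < C 0 0)
    (hpar : Parabolic (lkOne C)) (hirr : ¬ MatrixReducible C)
    (hirrlk : ¬ MatrixReducible (lkOne C)) : Parabolic C :=
  stmt6_general n C hsymm hneg hpos hpar hirr
end
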